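/- If K : [a, b] × [a, b] → ℝ is continuous with |K| ≤ M and φ : [a, b] → ℝ is continuous, then the Volterra integral equation of the second kind y(x) − ∫ₐˣ K(x,t) y(t) dt = φ(x) has a unique continuous solution y on [a, b]. -/

import Mathlib

open Set MeasureTheory intervalIntegral Function

noncomputable def volterraT (a b : ℝ) (hab : a ≤ b) (F : ℝ → ℝ → ℝ)
    (hF : Continuous fun p : ℝ × ℝ => F p.1 p.2) (Φ : ℝ → ℝ) (hΦ : Continuous Φ)
    (f : C(Icc a b, ℝ)) : C(Icc a b, ℝ) :=
  ⟨fun x => Φ x + ∫ t in a..(x:ℝ), F x t * IccExtend hab f t, by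
    have h : Continuous fun x : ℝ => Φ x + ∫ t in a..x, F x t * IccExtend hab f t := by
      refine hΦ.add (continuous_parametric_intervalIntegral_of_continuous
        (f := fun x t => F x t * IccExtend hab f t) (μ := volume) ?_ continuous_id)
      exact hF.mul ((f.continuous.Icc_extend').comp continuous_snd)
    exact h.comp continuous_subtype_val⟩

theorem volterraT_apply (a b : ℝ) (hab : a ≤ b) (F : ℝ → ℝ → ℝ)
    (hF : Continuous fun p : ℝ × ℝ => F p.1 p.2) (Φ : ℝ → ℝ) (hΦ : Continuous Φ)
    (f : C(Icc a b, ℝ)) (x : Icc a b) :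
    volterraT a b hab F hF Φ hΦ f x
      = Φ x + ∫ t in a..(x:ℝ), F x t * IccExtend hab f t := rfl

theorem volterra_key (a b : ℝ) (hab : a ≤ b) (M : ℝ) (hM0 : 0 ≤ M)
    (F : ℝ → ℝ → ℝ) (hF : Continuous fun p : ℝ × ℝ => F p.1 p.2)
    (hFb : ∀ x t, |F x t| ≤ M) (Φ : ℝ → ℝ) (hΦ : Continuous Φ)
    (f g : C(Icc a b, ℝ)) (n : ℕ) (x : Icc a b) :
    |((volterraT a b hab F hF Φ hΦ)^[n] f) x - ((volterraT a b hab F hF Φ hΦ)^[n] g) x|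
      ≤ M ^ n * ((x:ℝ) - a) ^ n / n.factorial * dist f g := by
  induction n generalizing x with
  | zero =>
    simpa [Real.dist_eq] using ContinuousMap.dist_apply_le_dist (f := f) (g := g) x
  | succ n ih =>
    rw [Function.iterate_succ_apply', Function.iterate_succ_apply']
    set u := (volterraT a b hab F hF Φ hΦ)^[n] f with hu
    set v := (volterraT a b hab F hF Φ hΦ)^[n] g with hv
    have hax : a ≤ (x:ℝ) := x.2.1
    have hcu : Continuous fun t : ℝ => F x t * IccExtend hab u t :=
      (hF.comp (Continuous.prodMk_right (x:ℝ))).mul u.continuous.Icc_extend'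
    have hcv : Continuous fun t : ℝ => F x t * IccExtend hab v t :=
      (hF.comp (Continuous.prodMk_right (x:ℝ))).mul v.continuous.Icc_extend'
    have key : (volterraT a b hab F hF Φ hΦ u) x - (volterraT a b hab F hF Φ hΦ v) x
        = ∫ t in a..(x:ℝ), (F x t * IccExtend hab u t - F x t * IccExtend hab v t) := by
      rw [volterraT_apply, volterraT_apply,
        intervalIntegral.integral_sub (hcu.intervalIntegrable _ _) (hcv.intervalIntegrable _ _)]
      ring
    rw [key]
    have h1 := intervalIntegral.abs_integral_le_integral_abs (a := a) (b := (x:ℝ))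
      (f := fun t => F x t * IccExtend hab u t - F x t * IccExtend hab v t) (μ := volume) hax
    refine h1.trans ?_
    have h2 : ∫ t in a..(x:ℝ), |F x t * IccExtend hab u t - F x t * IccExtend hab v t|
        ≤ ∫ t in a..(x:ℝ), (M ^ (n+1) * dist f g / n.factorial) * (t - a) ^ n := by
      refine intervalIntegral.integral_mono_on hax
        ((hcu.sub hcv).abs.intervalIntegrable _ _)
        ((by continuity : Continuous fun t : ℝ =>
          (M ^ (n+1) * dist f g / n.factorial) * (t - a) ^ n).intervalIntegrable _ _) ?_
      intro t ht
      have htb : t ∈ Icc a b := ⟨ht.1, ht.2.trans x.2.2⟩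
      have hut : IccExtend hab u t = u ⟨t, htb⟩ := IccExtend_of_mem hab _ htb
      have hvt : IccExtend hab v t = v ⟨t, htb⟩ := IccExtend_of_mem hab _ htb
      have hih := ih ⟨t, htb⟩
      have hta : (0:ℝ) ≤ t - a := by linarith [ht.1]
      calc |F x t * IccExtend hab u t - F x t * IccExtend hab v t|
          = |F x t| * |u ⟨t, htb⟩ - v ⟨t, htb⟩| := by
            rw [hut, hvt, ← abs_mul]; ring_nf
        _ ≤ M * (M ^ n * (t - a) ^ n / n.factorial * dist f g) := by
            refine mul_le_mul (hFb _ _) hih (abs_nonneg _) hM0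
        _ = (M ^ (n+1) * dist f g / n.factorial) * (t - a) ^ n := by ring
    refine h2.trans ?_
    have h3 : ∫ t in a..(x:ℝ), (M ^ (n+1) * dist f g / n.factorial) * (t - a) ^ n
        = (M ^ (n+1) * dist f g / n.factorial) * (((x:ℝ) - a) ^ (n+1) / (n+1)) := by
      rw [intervalIntegral.integral_const_mul]
      congr 1
      rw [intervalIntegral.integral_comp_sub_right (fun t => t ^ n) a]
      simp [integral_pow]
    rw [h3]
    have hfact : ((n+1).factorial : ℝ) = (n+1) * n.factorial := by
      rw [Nat.factorial_succ]; push_cast; ring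
    rw [hfact]
    have hnf : (0:ℝ) < n.factorial := by positivity
    refine le_of_eq ?_
    field_simp

theorem volterra_aux (a b : ℝ) (hab : a ≤ b) (M : ℝ) (hM0 : 0 ≤ M)
    (F : ℝ → ℝ → ℝ) (hF : Continuous fun p : ℝ × ℝ => F p.1 p.2)
    (hFb : ∀ x t, |F x t| ≤ M) (Φ : ℝ → ℝ) (hΦ : Continuous Φ) :
    ∃! f : C(Icc a b, ℝ), volterraT a b hab F hF Φ hΦ f = f := by
  haveI : Nonempty (Icc a b) := ⟨⟨a, le_refl a, hab⟩⟩
  set T := volterraT a b hab F hF Φ hΦ with hT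
  -- dist bound for iterates
  have hdist : ∀ n (f g : C(Icc a b, ℝ)),
      dist (T^[n] f) (T^[n] g) ≤ (M * (b - a)) ^ n / n.factorial * dist f g := by
    intro n f g
    rw [ContinuousMap.dist_le_iff_of_nonempty]
    intro x
    rw [Real.dist_eq]
    refine (volterra_key a b hab M hM0 F hF hFb Φ hΦ f g n x).trans ?_
    rw [mul_pow]
    have h1 : ((x:ℝ) - a) ^ n ≤ (b - a) ^ n := by
      have := x.2.1; have := x.2.2
      set_option linter.unnecessarySeqFocus false in
      gcongr <;> linarith
    have : (0:ℝ) ≤ dist f g := dist_nonneg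
    have hnf : (0:ℝ) < n.factorial := by positivity
    gcongr
  -- choose n with contraction constant < 1
  obtain ⟨n, hn⟩ : ∃ n : ℕ, (M * (b - a)) ^ n / n.factorial < 1 := by
    have := FloorSemiring.tendsto_pow_div_factorial_atTop (M * (b - a))
    have h := (this.eventually (gt_mem_nhds (by norm_num : (0:ℝ) < 1))).exists
    exact h
  have hcn : (0:ℝ) ≤ (M * (b - a)) ^ n / n.factorial :=
    div_nonneg (pow_nonneg (mul_nonneg hM0 (by linarith)) n) (by positivity)
  set c : NNReal := ⟨(M * (b - a)) ^ n / n.factorial, hcn⟩ with hc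
  have hcontr : ContractingWith c (T^[n]) := by
    constructor
    · exact_mod_cast hn
    · refine LipschitzWith.of_dist_le_mul fun f g => ?_
      exact hdist n f g
  set fp := ContractingWith.fixedPoint (T^[n]) hcontr with hfpdef
  have hfp : Function.IsFixedPt (T^[n]) fp := hcontr.fixedPoint_isFixedPt
  have hTfp : Function.IsFixedPt (T^[n]) (T fp) := by
    have hcomm : T^[n] (T fp) = T (T^[n] fp) :=
      (Function.iterate_succ_apply T n fp).symm.trans (Function.iterate_succ_apply' T n fp)
    unfold Function.IsFixedPt
    rw [hcomm, hfp]
  have hTfix : T fp = fp := hcontr.fixedPoint_unique' hTfp hfp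
  refine ⟨fp, hTfix, fun g hg => ?_⟩
  exact hcontr.fixedPoint_unique' (Function.IsFixedPt.iterate hg n) hfp

theorem volterra_second_kind_existence_uniqueness (a b : ℝ) (hab : a < b)
    (K : ℝ → ℝ → ℝ) (M : ℝ)
    (hK : ContinuousOn (fun p : ℝ × ℝ => K p.1 p.2) (Set.Icc a b ×ˢ Set.Icc a b))
    (hM : ∀ x ∈ Set.Icc a b, ∀ t ∈ Set.Icc a b, |K x t| ≤ M)
    (φ : ℝ → ℝ) (hφ : ContinuousOn φ (Set.Icc a b)) :
    (∃ y : ℝ → ℝ, ContinuousOn y (Set.Icc a b) ∧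
        ∀ x ∈ Set.Icc a b, y x - ∫ t in a..x, K x t * y t = φ x) ∧
      ∀ y₁ y₂ : ℝ → ℝ,
        (ContinuousOn y₁ (Set.Icc a b) ∧
          ∀ x ∈ Set.Icc a b, y₁ x - ∫ t in a..x, K x t * y₁ t = φ x) →
        (ContinuousOn y₂ (Set.Icc a b) ∧
          ∀ x ∈ Set.Icc a b, y₂ x - ∫ t in a..x, K x t * y₂ t = φ x) →
        Set.EqOn y₁ y₂ (Set.Icc a b) := by
  have hab' : a ≤ b := hab.le
  have haa : a ∈ Icc a b := ⟨le_refl a, hab'⟩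
  have hM0 : (0:ℝ) ≤ M := (abs_nonneg _).trans (hM a haa a haa)
  set F : ℝ → ℝ → ℝ := fun x t => K (projIcc a b hab' x) (projIcc a b hab' t) with hFdef
  have hFc : Continuous fun p : ℝ × ℝ => F p.1 p.2 := by
    have hg : Continuous fun p : ℝ × ℝ =>
        ((projIcc a b hab' p.1 : ℝ), (projIcc a b hab' p.2 : ℝ)) := by continuity
    exact hK.comp_continuous hg
      (fun p => ⟨(projIcc a b hab' p.1).2, (projIcc a b hab' p.2).2⟩)
  have hFb : ∀ x t, |F x t| ≤ M := fun x t =>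
    hM _ (projIcc a b hab' x).2 _ (projIcc a b hab' t).2
  set Φ : ℝ → ℝ := fun x => φ (projIcc a b hab' x) with hΦdef
  have hΦc : Continuous Φ :=
    hφ.comp_continuous (by continuity)
      (fun x => (projIcc a b hab' x).2)
  obtain ⟨f, hf, huniq⟩ := volterra_aux a b hab' M hM0 F hFc hFb Φ hΦc
  -- key: for any g : C(Icc a b, ℝ) and y agreeing with g on Icc, the integrals coincide
  have hicongr : ∀ (g : C(Icc a b, ℝ)) (y : ℝ → ℝ),
      (∀ t (ht : t ∈ Icc a b), y t = g ⟨t, ht⟩) → ∀ x ∈ Icc a b,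
      (∫ t in a..x, F x t * IccExtend hab' g t) = ∫ t in a..x, K x t * y t := by
    intro g y hy x hx
    refine intervalIntegral.integral_congr fun t ht => ?_
    rw [Set.uIcc_of_le hx.1] at ht
    have htb : t ∈ Icc a b := ⟨ht.1, ht.2.trans hx.2⟩
    rw [IccExtend_of_mem hab' _ htb, hy t htb, hFdef]
    simp only [projIcc_of_mem hab' hx, projIcc_of_mem hab' htb]
  -- fixed points correspond to solutions
  have hΦeq : ∀ x ∈ Icc a b, Φ x = φ x := fun x hx => by
    simp only [hΦdef, projIcc_of_mem hab' hx]
  constructor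
  · refine ⟨IccExtend hab' f, f.continuous.Icc_extend'.continuousOn, fun x hx => ?_⟩
    have h1 : IccExtend hab' f x = f ⟨x, hx⟩ := IccExtend_of_mem hab' _ hx
    have h2 := congrArg (fun g : C(Icc a b, ℝ) => g ⟨x, hx⟩) hf
    simp only [volterraT_apply] at h2
    have h3 := hicongr f (IccExtend hab' f)
      (fun t ht => IccExtend_of_mem hab' _ ht) x hx
    rw [h1, ← h2, hΦeq x hx, h3]
    ring
  · rintro y₁ y₂ ⟨hc₁, he₁⟩ ⟨hc₂, he₂⟩ x hx
    have mk : ∀ (y : ℝ → ℝ), ContinuousOn y (Icc a b) →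
        (∀ x ∈ Icc a b, y x - ∫ t in a..x, K x t * y t = φ x) →
        ∀ xx : Icc a b, y xx = f xx := by
      intro y hc he
      have hg : volterraT a b hab' F hFc Φ hΦc ⟨fun x : Icc a b => y x, hc.restrict⟩
          = ⟨fun x : Icc a b => y x, hc.restrict⟩ := by
        ext xx
        rw [volterraT_apply]
        have h3 := hicongr ⟨fun x : Icc a b => y x, hc.restrict⟩ y
          (fun t ht => rfl) xx xx.2
        rw [h3, hΦeq _ xx.2]
        have := he xx xx.2
        show _ = y xx
        linarith
      have := huniq _ hg
      intro xx
      have := congrArg (fun g : C(Icc a b, ℝ) => g xx) this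
      exact this
    rw [show y₁ x = y₁ (⟨x, hx⟩ : Icc a b) from rfl]
    rw [mk y₁ hc₁ he₁ ⟨x, hx⟩, ← mk y₂ hc₂ he₂ ⟨x, hx⟩]
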